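/- For every odd prime p, the element r_b ∈ F_4 does not belong to the subgroup W̄_p · γ_{p+1} F_4. -/

import Mathlib

/-- `W_n`, the set of `n`-th powers in a group `G`. -/
def powSet (G : Type*) [Group G] (n : ℕ) : Set G := {x | ∃ w : G, x = w ^ n}

/-- `W̄_n`, the normal subgroup of the free group `F_m` generated by the set `W_n`
of `n`-th powers. -/
def Wbar (m n : ℕ) : Subgroup (FreeGroup (Fin m)) :=
  Subgroup.normalClosure (powSet (FreeGroup (Fin m)) n)

instance (m n : ℕ) : (Wbar m n).Normal := Subgroup.normalClosure_normal

/-- `W̄_n · γ_q F_m`: since both factors are normal subgroups of `F_m`, this product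
subgroup equals the join.  (Recall `lowerCentralSeries G 0 = G = γ₁ G`, so
`γ_q G = lowerCentralSeries G (q-1)`.) -/
def WbarGamma (m n q : ℕ) : Subgroup (FreeGroup (Fin m)) :=
  Wbar m n ⊔ Subgroup.lowerCentralSeries (⊤ : Subgroup (FreeGroup (Fin m))) (q - 1)

instance (m n q : ℕ) : (WbarGamma m n q).Normal := Subgroup.sup_normal _ _

/-- `F^q(m,n) = F_m / (W̄_n · γ_q F_m)`. -/
def BurnsideQuot (m n q : ℕ) : Type := FreeGroup (Fin m) ⧸ WbarGamma m n q

noncomputable instance (m n q : ℕ) : Group (BurnsideQuot m n q) :=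
  QuotientGroup.Quotient.group _

/-- The generators `x_1, …, x_4` of the free group `F_4` (`xF4 i` is `x_{i+1}`). -/
def xF4 (i : Fin 4) : FreeGroup (Fin 4) := FreeGroup.of i

/-- `Q_3 = x_4x_1⁻¹x_2x_4⁻¹x_1x_2⁻¹ · x_3 · x_2⁻¹x_1x_4⁻¹x_2x_1⁻¹x_4 ∈ F_4`. -/
def QWelded : FreeGroup (Fin 4) :=
  xF4 3 * (xF4 0)⁻¹ * xF4 1 * (xF4 3)⁻¹ * xF4 0 * (xF4 1)⁻¹ *
  xF4 2 *
  (xF4 1)⁻¹ * xF4 0 * (xF4 3)⁻¹ * xF4 1 * (xF4 0)⁻¹ * xF4 3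

/-- `r_b = Q_3 x_3⁻¹ ∈ F_4`, the relator of the associated core group of the closure
of the welded 4-braid `b`. -/
def rWelded : FreeGroup (Fin 4) := QWelded * (xF4 2)⁻¹

/-!
Every homomorphism from `F₄` to a group of exponent `p` and nilpotency class at most `p` kills
`W̄_p · γ_{p+1} F₄`, so it suffices to exhibit such a group in which the image of `r_b` is
nontrivial. For `p ≥ 5` the unitriangular group `UT₄(𝔽_p)` works: it has class 3, its exponent is
`p` because `p` divides `C(p, 1)`, `C(p, 2)` and `C(p, 3)`, and `x₂ ↦ 1 + E₃₄`, `x₄ ↦ 1 + E₁₂ + E₂₃`,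
`x₁, x₃ ↦ 1` send `r_b` to `1 + E₁₄`. For `p = 3`, where `UT₄(𝔽₃)` has exponent 9, the Burnside
group `B(3,3)` (class 3) takes over, with `x₁, x₂, x₃` sent to its generators and `x₄ ↦ 1`.
-/

open scoped commutatorElement

theorem Subgroup.lowerCentralSeries_three_eq_bot_of_commutator_eq_one {G : Type*} [Group G]
    (h : ∀ x y z w : G, ⁅⁅⁅x, y⁆, z⁆, w⁆ = 1) :
    Subgroup.lowerCentralSeries (⊤ : Subgroup G) 3 = ⊥ := by
  rw [Subgroup.lowerCentralSeries_eq_bot_iff_upperCentralSeries_eq_top, eq_top_iff]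
  exact fun x _ y z w => h x y z w

theorem WbarGamma_le_ker {m n q c : ℕ} {G : Type*} [Group G] (φ : FreeGroup (Fin m) →* G)
    (hexp : ∀ g : G, g ^ n = 1) (hnil : Subgroup.lowerCentralSeries (⊤ : Subgroup G) c = ⊥)
    (hc : c < q) : WbarGamma m n q ≤ φ.ker := by
  refine sup_le (Subgroup.normalClosure_le_normal ?_) fun x hx => ?_
  · rintro _ ⟨w, rfl⟩
    exact (map_pow φ w n).trans (hexp (φ w))
  · have hbot : Subgroup.lowerCentralSeries (⊤ : Subgroup G) (q - 1) = ⊥ :=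
      le_bot_iff.mp (hnil ▸ Subgroup.lowerCentralSeries_antitone _ (Nat.le_pred_of_lt hc))
    have hφx : φ x ∈ Subgroup.lowerCentralSeries ((⊤ : Subgroup _).map φ) (q - 1) := by
      rw [← Subgroup.map_lowerCentralSeries]
      exact Subgroup.mem_map_of_mem φ hx
    simpa [hbot] using Subgroup.lowerCentralSeries_mono (q - 1) le_top hφx

/-- `⟨a, b, c, d, e, f⟩` stands for the matrix `1 + a E₁₂ + b E₂₃ + c E₃₄ + d E₁₃ + e E₂₄ + f E₁₄`. -/
@[ext] structure UT4 (R : Type*) where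
  a : R
  b : R
  c : R
  d : R
  e : R
  f : R

namespace UT4

variable {R : Type*} [CommRing R]

instance : One (UT4 R) := ⟨⟨0, 0, 0, 0, 0, 0⟩⟩

instance : Mul (UT4 R) :=
  ⟨fun x y => ⟨x.a + y.a, x.b + y.b, x.c + y.c, x.d + y.d + x.a * y.b, x.e + y.e + x.b * y.c,
    x.f + y.f + x.a * y.e + x.d * y.c⟩⟩

instance : Inv (UT4 R) :=
  ⟨fun x => ⟨-x.a, -x.b, -x.c, -x.d + x.a * x.b, -x.e + x.b * x.c,
    -x.f + x.a * x.e + x.d * x.c - x.a * x.b * x.c⟩⟩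

@[simp] lemma one_a : (1 : UT4 R).a = 0 := rfl
@[simp] lemma one_b : (1 : UT4 R).b = 0 := rfl
@[simp] lemma one_c : (1 : UT4 R).c = 0 := rfl
@[simp] lemma one_d : (1 : UT4 R).d = 0 := rfl
@[simp] lemma one_e : (1 : UT4 R).e = 0 := rfl
@[simp] lemma one_f : (1 : UT4 R).f = 0 := rfl
@[simp] lemma mul_a (x y : UT4 R) : (x * y).a = x.a + y.a := rfl
@[simp] lemma mul_b (x y : UT4 R) : (x * y).b = x.b + y.b := rfl
@[simp] lemma mul_c (x y : UT4 R) : (x * y).c = x.c + y.c := rfl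
@[simp] lemma mul_d (x y : UT4 R) : (x * y).d = x.d + y.d + x.a * y.b := rfl
@[simp] lemma mul_e (x y : UT4 R) : (x * y).e = x.e + y.e + x.b * y.c := rfl
@[simp] lemma mul_f (x y : UT4 R) : (x * y).f = x.f + y.f + x.a * y.e + x.d * y.c := rfl
@[simp] lemma inv_a (x : UT4 R) : x⁻¹.a = -x.a := rfl
@[simp] lemma inv_b (x : UT4 R) : x⁻¹.b = -x.b := rfl
@[simp] lemma inv_c (x : UT4 R) : x⁻¹.c = -x.c := rfl
@[simp] lemma inv_d (x : UT4 R) : x⁻¹.d = -x.d + x.a * x.b := rfl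
@[simp] lemma inv_e (x : UT4 R) : x⁻¹.e = -x.e + x.b * x.c := rfl
@[simp] lemma inv_f (x : UT4 R) : x⁻¹.f = -x.f + x.a * x.e + x.d * x.c - x.a * x.b * x.c := rfl

instance : Group (UT4 R) where
  mul_assoc x y z := by ext <;> simp <;> ring
  one_mul x := by ext <;> simp
  mul_one x := by ext <;> simp
  inv_mul_cancel x := by
    ext <;> simp
    ring

theorem pow_eq (x : UT4 R) (n : ℕ) :
    x ^ n = ⟨n * x.a, n * x.b, n * x.c, n * x.d + n.choose 2 * (x.a * x.b),
      n * x.e + n.choose 2 * (x.b * x.c),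
      n * x.f + n.choose 2 * (x.a * x.e + x.d * x.c) + n.choose 3 * (x.a * x.b * x.c)⟩ := by
  induction n with
  | zero => ext <;> simp
  | succ n ih =>
    rw [pow_succ, ih]
    ext <;> simp [Nat.choose_succ_succ] <;> ring

theorem pow_eq_one_of_charP {p : ℕ} [CharP R p] (hp : p.Prime) (hp3 : 3 < p) (x : UT4 R) :
    x ^ p = 1 := by
  have hchoose (k : ℕ) (hk0 : k ≠ 0) (hkp : k < p) : (p.choose k : R) = 0 :=
    (CharP.cast_eq_zero_iff R p _).mpr (hp.dvd_choose_self hk0 hkp)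
  rw [pow_eq]
  ext <;> simp [hchoose 2 two_ne_zero (by omega), hchoose 3 three_ne_zero hp3]

theorem lowerCentralSeries_three_eq_bot :
    Subgroup.lowerCentralSeries (⊤ : Subgroup (UT4 R)) 3 = ⊥ :=
  Subgroup.lowerCentralSeries_three_eq_bot_of_commutator_eq_one fun x y z w => by
    ext <;> simp [commutatorElement_def] <;> ring

theorem lift_rWelded : FreeGroup.lift ![1, ⟨0, 0, 1, 0, 0, 0⟩, 1, ⟨1, 1, 0, 0, 0, 0⟩] rWelded =
    (⟨0, 0, 0, 0, 0, 1⟩ : UT4 R) := by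
  ext <;> simp [rWelded, QWelded, xF4]

end UT4

/-- Coordinates on the Burnside group `B(3,3)` of order `3⁷`, generated by the three elements whose
`(a₁, a₂, a₃)` is a unit vector and whose other coordinates vanish. -/
@[ext] structure B33 where
  a₁ : ZMod 3
  a₂ : ZMod 3
  a₃ : ZMod 3
  b₁ : ZMod 3
  b₂ : ZMod 3
  b₃ : ZMod 3
  c : ZMod 3
deriving DecidableEq

namespace B33

instance : One B33 := ⟨⟨0, 0, 0, 0, 0, 0, 0⟩⟩

instance : Mul B33 :=
  ⟨fun x y => ⟨x.a₁ + y.a₁, x.a₂ + y.a₂, x.a₃ + y.a₃, x.b₁ + y.b₁ + x.a₂ * y.a₁,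
    x.b₂ + y.b₂ + x.a₃ * y.a₁, x.b₃ + y.b₃ + x.a₃ * y.a₂,
    x.c + y.c + x.b₃ * y.a₁ + x.a₂ * x.a₃ * y.a₁ - x.b₂ * y.a₂ - x.a₃ * y.a₁ * y.a₂
      + x.b₁ * y.a₃ + x.a₂ * y.a₁ * y.a₃⟩⟩

instance : Inv B33 :=
  ⟨fun x => ⟨-x.a₁, -x.a₂, -x.a₃, -x.b₁ + x.a₁ * x.a₂, -x.b₂ + x.a₁ * x.a₃,
    -x.b₃ + x.a₂ * x.a₃, -x.c + x.b₃ * x.a₁ + x.b₁ * x.a₃ - x.b₂ * x.a₂ + x.a₁ * x.a₂ * x.a₃⟩⟩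

@[simp] lemma one_a₁ : (1 : B33).a₁ = 0 := rfl
@[simp] lemma one_a₂ : (1 : B33).a₂ = 0 := rfl
@[simp] lemma one_a₃ : (1 : B33).a₃ = 0 := rfl
@[simp] lemma one_b₁ : (1 : B33).b₁ = 0 := rfl
@[simp] lemma one_b₂ : (1 : B33).b₂ = 0 := rfl
@[simp] lemma one_b₃ : (1 : B33).b₃ = 0 := rfl
@[simp] lemma one_c : (1 : B33).c = 0 := rfl
@[simp] lemma mul_a₁ (x y : B33) : (x * y).a₁ = x.a₁ + y.a₁ := rfl
@[simp] lemma mul_a₂ (x y : B33) : (x * y).a₂ = x.a₂ + y.a₂ := rfl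
@[simp] lemma mul_a₃ (x y : B33) : (x * y).a₃ = x.a₃ + y.a₃ := rfl
@[simp] lemma mul_b₁ (x y : B33) : (x * y).b₁ = x.b₁ + y.b₁ + x.a₂ * y.a₁ := rfl
@[simp] lemma mul_b₂ (x y : B33) : (x * y).b₂ = x.b₂ + y.b₂ + x.a₃ * y.a₁ := rfl
@[simp] lemma mul_b₃ (x y : B33) : (x * y).b₃ = x.b₃ + y.b₃ + x.a₃ * y.a₂ := rfl
@[simp] lemma mul_c (x y : B33) : (x * y).c = x.c + y.c + x.b₃ * y.a₁ + x.a₂ * x.a₃ * y.a₁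
    - x.b₂ * y.a₂ - x.a₃ * y.a₁ * y.a₂ + x.b₁ * y.a₃ + x.a₂ * y.a₁ * y.a₃ := rfl
@[simp] lemma inv_a₁ (x : B33) : x⁻¹.a₁ = -x.a₁ := rfl
@[simp] lemma inv_a₂ (x : B33) : x⁻¹.a₂ = -x.a₂ := rfl
@[simp] lemma inv_a₃ (x : B33) : x⁻¹.a₃ = -x.a₃ := rfl
@[simp] lemma inv_b₁ (x : B33) : x⁻¹.b₁ = -x.b₁ + x.a₁ * x.a₂ := rfl
@[simp] lemma inv_b₂ (x : B33) : x⁻¹.b₂ = -x.b₂ + x.a₁ * x.a₃ := rfl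
@[simp] lemma inv_b₃ (x : B33) : x⁻¹.b₃ = -x.b₃ + x.a₂ * x.a₃ := rfl
@[simp] lemma inv_c (x : B33) : x⁻¹.c =
    -x.c + x.b₃ * x.a₁ + x.b₁ * x.a₃ - x.b₂ * x.a₂ + x.a₁ * x.a₂ * x.a₃ := rfl

-- The group laws hold only modulo 3.
instance : Group B33 where
  mul_assoc x y z := by ext <;> simp <;> grind
  one_mul x := by ext <;> simp
  mul_one x := by ext <;> simp
  inv_mul_cancel x := by ext <;> simp <;> grind

theorem pow_three_eq_one (x : B33) : x ^ 3 = 1 := by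
  ext <;> simp [pow_succ] <;> grind

theorem lowerCentralSeries_three_eq_bot :
    Subgroup.lowerCentralSeries (⊤ : Subgroup B33) 3 = ⊥ :=
  Subgroup.lowerCentralSeries_three_eq_bot_of_commutator_eq_one fun x y z w => by
    ext <;> simp [commutatorElement_def] <;> grind

theorem lift_rWelded : FreeGroup.lift ![⟨1, 0, 0, 0, 0, 0, 0⟩, ⟨0, 1, 0, 0, 0, 0, 0⟩,
    ⟨0, 0, 1, 0, 0, 0, 0⟩, 1] rWelded = (⟨0, 0, 0, 0, 0, 0, 1⟩ : B33) := by
  simp only [rWelded, QWelded, xF4, map_mul, map_inv, FreeGroup.lift_apply_of, Matrix.cons_val,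
    Matrix.cons_val_zero, Matrix.cons_val_one, inv_one, one_mul, mul_one]
  decide

end B33

/-- For every odd prime `p`, the element `r_b ∈ F_4` does not belong
to the subgroup `W̄_p · γ_{p+1} F_4`. -/
theorem rWelded_not_mem_WbarGamma (p : ℕ) (hp : p.Prime) (hodd : Odd p) :
    rWelded ∉ WbarGamma 4 p (p + 1) := by
  have hp3 : 3 ≤ p := by
    obtain ⟨k, rfl⟩ := hodd
    have := hp.two_le
    omega
  rcases hp3.eq_or_lt with rfl | hp3
  · have hne : FreeGroup.lift ![⟨1, 0, 0, 0, 0, 0, 0⟩, ⟨0, 1, 0, 0, 0, 0, 0⟩,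
        ⟨0, 0, 1, 0, 0, 0, 0⟩, 1] rWelded ≠ (1 : B33) := by
      rw [B33.lift_rWelded]
      decide
    exact fun h => hne (WbarGamma_le_ker _ B33.pow_three_eq_one
      B33.lowerCentralSeries_three_eq_bot (Nat.lt_succ_self 3) h)
  · have : Fact p.Prime := ⟨hp⟩
    have hne : FreeGroup.lift ![1, ⟨0, 0, 1, 0, 0, 0⟩, 1, ⟨1, 1, 0, 0, 0, 0⟩] rWelded ≠
        (1 : UT4 (ZMod p)) := by
      rw [UT4.lift_rWelded]
      exact fun h => one_ne_zero (congrArg UT4.f h)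
    exact fun h => hne (WbarGamma_le_ker _ (UT4.pow_eq_one_of_charP hp hp3)
      UT4.lowerCentralSeries_three_eq_bot (by omega) h)
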